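/- The global function f_Y of the sand automaton Y is not injective: the two distinct configurations c and c' defined by c_{2i} = i, c_{2i+1} = i + 2 and c'_{2i} = i, c'_{2i+1} = i + 3 for all i ∈ ℤ satisfy f_Y(c) = f_Y(c') = c. -/

import Mathlib

/-- The extended integers `ℤ ∪ {-∞, +∞}`. -/
abbrev EZ : Type := WithBot (WithTop ℤ)

/-- Embedding of `ℤ` into the extended integers. -/
def finVal (n : ℤ) : EZ := ((n : WithTop ℤ) : EZ)

/-- The integer value of a finite extended integer (`0` on `±∞`). -/
def valZ (x : EZ) : ℤ := WithBot.recBotCoe 0 (fun y => WithTop.recTopCoe 0 id y) x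

/-- The measuring device `β_l^m`. -/
noncomputable def beta (l : ℕ) (m : ℤ) (n : EZ) : EZ :=
  if finVal (m + (l : ℤ)) < n then ⊤
  else if n < finVal (m - (l : ℤ)) then ⊥
  else WithBot.map (WithTop.map (fun k => k - m)) n

/-- Reference height: the value of `x` if finite, `0` if `x = ±∞`. -/
def refH (x : EZ) : ℤ := if x = ⊥ ∨ x = ⊤ then 0 else valZ x

/-- One-dimensional sandpile configurations. -/
abbrev Config : Type := ℤ → EZ

/-- The neighborhood sequence `d_r^i(c)`: the `2r`-tuple of measured differences. -/
noncomputable def nbhd (r : ℕ) (c : Config) (i : ℤ) : Fin (2 * r) → EZ :=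
  fun j => beta r (refH (c i))
    (c (i + (if (j : ℕ) < r then ((j : ℕ) : ℤ) - (r : ℤ) else ((j : ℕ) : ℤ) - (r : ℤ) + 1)))

/-- The global function of the sand automaton of radius `r` with local rule `lam`. -/
noncomputable def globalF (r : ℕ) (lam : (Fin (2 * r) → EZ) → ℤ) (c : Config) : Config :=
  fun i => if c i = ⊥ ∨ c i = ⊤ then c i
    else finVal (valZ (c i) + lam (nbhd r c i))

/-- Finite configurations. -/
def FiniteConf (c : Config) : Prop := ∃ k : ℕ, ∀ i : ℤ, (k : ℤ) ≤ |i| → c i = finVal 0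

/-- Periodic configurations. -/
def PeriodicConf (c : Config) : Prop := ∃ p : ℤ, p ≠ 0 ∧ ∀ i : ℤ, c (i + p) = c i


/-- The local rule of the sand automaton `Y` (radius 2, arguments `(a,b,x,y)`):
returns `-1` on `(+∞,-,-,-)`, `(2,-,-,-)`, `(1,-,-,-)`, `(0,-,-,-)`, `(-1,-∞,-,-)`,
and `0` otherwise. -/
def lamY (v : Fin 4 → EZ) : ℤ :=
  if v 0 = ⊤ ∨ v 0 = finVal 2 ∨ v 0 = finVal 1 ∨ v 0 = finVal 0 then -1
  else if v 0 = finVal (-1) ∧ v 1 = ⊥ then -1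
  else 0

/-!
In both configurations every site has its second left neighbour exactly one grain lower, so
`λ_Y` reads `a = -1` everywhere and the site falls by one grain iff its first left neighbour
is more than two grains below it (`b = -∞`). In `c` this never happens, so `c` is a fixed point;
in `c'` it happens exactly at the odd sites, which fall from `i + 3` to `i + 2`, turning `c'`
into `c`.
-/

lemma finVal_injective : Function.Injective finVal := fun _ _ h => by simpa [finVal] using h

lemma finVal_ne_bot (n : ℤ) : finVal n ≠ ⊥ := WithBot.coe_ne_bot

lemma finVal_ne_top (n : ℤ) : finVal n ≠ ⊤ := by simp [finVal]

lemma finVal_lt_finVal {a b : ℤ} : finVal a < finVal b ↔ a < b := by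
  simp only [finVal, WithBot.coe_lt_coe, WithTop.coe_lt_coe]

lemma refH_finVal (n : ℤ) : refH (finVal n) = n := by
  rw [refH, if_neg (by simp [finVal_ne_bot, finVal_ne_top])]
  rfl

lemma beta_finVal_eq_bot_iff (l : ℕ) (m n : ℤ) : beta l m (finVal n) = ⊥ ↔ n < m - l := by
  unfold beta
  simp only [finVal_lt_finVal]
  split_ifs with hgt hlt
  · exact iff_of_false (by simp) (by omega)
  · exact iff_of_true rfl hlt
  · exact iff_of_false WithBot.coe_ne_bot hlt

lemma beta_finVal_of_mem_Icc (l : ℕ) (m n : ℤ) (h : n ∈ Set.Icc (m - l) (m + l)) :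
    beta l m (finVal n) = finVal (n - m) := by
  simp only [beta, finVal_lt_finVal, if_neg (not_lt.2 h.2), if_neg (not_lt.2 h.1)]
  rfl

lemma globalF_of_eq_finVal (r : ℕ) (lam : (Fin (2 * r) → EZ) → ℤ) {c : Config} {i m : ℤ}
    (hm : c i = finVal m) : globalF r lam c i = finVal (m + lam (nbhd r c i)) := by
  rw [globalF, if_neg (by simp [hm, finVal_ne_bot, finVal_ne_top]), hm]
  rfl

lemma nbhd_two_zero (c : Config) (i : ℤ) :
    nbhd 2 c i 0 = beta 2 (refH (c i)) (c (i - 2)) := by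
  simp [nbhd, sub_eq_add_neg]

lemma nbhd_two_one (c : Config) (i : ℤ) :
    nbhd 2 c i 1 = beta 2 (refH (c i)) (c (i - 1)) := by
  simp [nbhd, sub_eq_add_neg]

lemma lamY_of_eq_neg_one {v : Fin 4 → EZ} (h : v 0 = finVal (-1)) :
    lamY v = if v 1 = ⊥ then -1 else 0 := by
  have hfirst : ¬ (v 0 = ⊤ ∨ v 0 = finVal 2 ∨ v 0 = finVal 1 ∨ v 0 = finVal 0) := by
    simp [h, finVal_ne_top, finVal_injective.eq_iff]
  rw [lamY, if_neg hfirst]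
  simp [h]

lemma globalF_lamY_of_left_step {c : Config} {i m b : ℤ} (hm : c i = finVal m)
    (hleft₂ : c (i - 2) = finVal (m - 1)) (hleft₁ : c (i - 1) = finVal b) :
    globalF 2 lamY c i = finVal (if b < m - 2 then m - 1 else m) := by
  have ha : nbhd 2 c i 0 = finVal (-1) := by
    rw [nbhd_two_zero, hm, refH_finVal, hleft₂, beta_finVal_of_mem_Icc _ _ _ ⟨by omega, by omega⟩]
    simp
  have hb : nbhd 2 c i 1 = ⊥ ↔ b < m - 2 := by
    rw [nbhd_two_one, hm, refH_finVal, hleft₁, beta_finVal_eq_bot_iff]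
    rfl
  rw [globalF_of_eq_finVal _ _ hm, lamY_of_eq_neg_one ha]
  simp only [hb]
  split_ifs <;> simp [sub_eq_add_neg]

def IsStaircase (d : ℤ) (c : Config) : Prop :=
  ∀ k : ℤ, c (2 * k) = finVal k ∧ c (2 * k + 1) = finVal (k + d)

lemma IsStaircase.unique {d : ℤ} {c c' : Config} (hc : IsStaircase d c)
    (hc' : IsStaircase d c') : c = c' := by
  funext i
  obtain ⟨k, rfl | rfl⟩ := Int.even_or_odd' i
  · rw [(hc k).1, (hc' k).1]
  · rw [(hc k).2, (hc' k).2]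

lemma IsStaircase.globalF_lamY {d : ℤ} {c : Config} (hd : -1 ≤ d) (hc : IsStaircase d c) :
    IsStaircase (if 2 < d then d - 1 else d) (globalF 2 lamY c) := by
  intro k
  obtain ⟨hprev_even, hprev_odd⟩ :
      c (2 * k - 2) = finVal (k - 1) ∧ c (2 * k - 1) = finVal (k + d - 1) := by
    have h := hc (k - 1)
    rwa [show 2 * (k - 1) = 2 * k - 2 by ring, show 2 * k - 2 + 1 = 2 * k - 1 by ring,
      show k - 1 + d = k + d - 1 by ring] at h
  have heven := globalF_lamY_of_left_step (hc k).1 hprev_even hprev_odd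
  have hodd := globalF_lamY_of_left_step (hc k).2
    (by rwa [show 2 * k + 1 - 2 = 2 * k - 1 by ring]) (by rw [add_sub_cancel_right]; exact (hc k).1)
  rw [heven, hodd, if_neg (by omega)]
  refine ⟨rfl, congrArg finVal ?_⟩
  simp only [show k < k + d - 2 ↔ 2 < d by omega]
  split_ifs <;> ring

/-- `f_Y` is not injective: the two distinct configurations `c` (with `c_{2i} = i`,
`c_{2i+1} = i + 2`) and `c'` (with `c'_{2i} = i`, `c'_{2i+1} = i + 3`) satisfy
`f_Y(c) = f_Y(c') = c`. -/
theorem Y_not_injective (c c' : Config)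
    (hc : ∀ i : ℤ, c (2 * i) = finVal i ∧ c (2 * i + 1) = finVal (i + 2))
    (hc' : ∀ i : ℤ, c' (2 * i) = finVal i ∧ c' (2 * i + 1) = finVal (i + 3)) :
    c ≠ c' ∧ globalF 2 lamY c = c ∧ globalF 2 lamY c' = c ∧
    ¬ Function.Injective (globalF 2 lamY) := by
  have hne : c ≠ c' := fun h => by
    have h₁ := (hc 0).2
    rw [h, (hc' 0).2] at h₁
    exact absurd (finVal_injective h₁) (by norm_num)
  have hfc : globalF 2 lamY c = c := by
    have hstep : IsStaircase 2 (globalF 2 lamY c) := by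
      simpa using IsStaircase.globalF_lamY (d := 2) (by norm_num) hc
    exact hstep.unique hc
  have hfc' : globalF 2 lamY c' = c := by
    have hstep : IsStaircase 2 (globalF 2 lamY c') := by
      simpa using IsStaircase.globalF_lamY (d := 3) (by norm_num) hc'
    exact hstep.unique hc
  exact ⟨hne, hfc, hfc', fun hinj => hne (hinj (hfc.trans hfc'.symm))⟩
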